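/- arXiv:2306.14150 — 2 statements merged into one kernel-verified Lean document; each statement's English description precedes it below -/
import Mathlib

section
/- Let A and Γ be self-adjoint operators on a finite-dimensional complex inner product space V with Γ² = Id, AΓ = -ΓA. For m > 0, define the eta-type sum η(B) = Σ_{μ ∈ spec(B), μ≠0} sign(μ) · dim(eigenspace of μ) for a self-adjoint operator B on V. Then for all m > 0, (η(A + mΓ) - η(A - mΓ))/2 = tr(Γ|_{ker A}). -/
/-- The eta-type sum of a (self-adjoint) endomorphism on a finite-dimensional space:
    sum over nonzero eigenvalues μ of sign(μ) times the dimension of the eigenspace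
    (`Real.sign 0 = 0`, so the zero eigenvalue does not contribute). -/
noncomputable def etaSum {V : Type*} [NormedAddCommGroup V] [InnerProductSpace ℂ V]
    (B : V →ₗ[ℂ] V) : ℝ :=
  ∑' μ : ℝ, Real.sign μ * (Module.finrank ℂ (Module.End.eigenspace B (μ : ℂ)) : ℝ)

section EtaAux
open Module LinearMap
set_option linter.unusedSectionVars false
set_option maxHeartbeats 1000000

variable {V : Type*} [NormedAddCommGroup V] [InnerProductSpace ℂ V] [FiniteDimensional ℂ V]

lemma aux_ker_sq (A : V →ₗ[ℂ] V) (hA : LinearMap.adjoint A = A) {v : V}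
    (h : A (A v) = 0) : A v = 0 := by
  have h1 : inner ℂ (A v) (A v) = (0 : ℂ) := by
    rw [← LinearMap.adjoint_inner_left A, hA, h, inner_zero_left]
  simpa using inner_self_eq_zero.mp h1

lemma aux_rank_le (A Γ : V →ₗ[ℂ] V)
    (hΓ2 : Γ ∘ₗ Γ = LinearMap.id)
    (hanti : A ∘ₗ Γ = -(Γ ∘ₗ A))
    (m : ℝ) (c : ℂ) (hc : c ^ 2 ≠ (m : ℂ) ^ 2) :
    finrank ℂ (Module.End.eigenspace (A + (m : ℂ) • Γ) c) ≤
      finrank ℂ (Module.End.eigenspace (A + (m : ℂ) • Γ) (-c)) := by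
  set D : V →ₗ[ℂ] V := A + (m : ℂ) • Γ with hD
  have hΓΓ : ∀ x, Γ (Γ x) = x := fun x => congrFun (congrArg DFunLike.coe hΓ2) x
  have hAΓ : ∀ x, A (Γ x) = -Γ (A x) := by
    intro x
    have := congrFun (congrArg DFunLike.coe hanti) x
    simpa using this
  have hAv' : ∀ v ∈ Module.End.eigenspace D c, A v = c • v - (m:ℂ) • Γ v := by
    intro v hv
    rw [Module.End.mem_eigenspace_iff] at hv
    have h0 : A v + (m:ℂ) • Γ v = c • v := by simpa [hD] using hv
    linear_combination (norm := module) h0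
  have hA2 : ∀ v ∈ Module.End.eigenspace D c, A (A v) = (c ^ 2 - (m:ℂ) ^ 2) • v := by
    intro v hv
    have hAv := hAv' v hv
    have hΓAv : Γ (A v) = c • Γ v - (m:ℂ) • v := by
      rw [hAv]; simp [map_smul, hΓΓ, map_sub]
    calc A (A v) = A (c • v - (m:ℂ) • Γ v) := by rw [← hAv]
      _ = c • A v - (m:ℂ) • A (Γ v) := by simp [map_sub, map_smul]
      _ = c • (c • v - (m:ℂ) • Γ v) - (m:ℂ) • (-(c • Γ v - (m:ℂ) • v)) := by
            rw [← hAv, hAΓ, hΓAv]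
      _ = (c ^ 2 - (m:ℂ) ^ 2) • v := by module
  -- the map T = Γ ∘ A sends E_c to E_{-c}
  set T : V →ₗ[ℂ] V := Γ ∘ₗ A with hT
  have hmaps : Set.MapsTo T (Module.End.eigenspace D c) (Module.End.eigenspace D (-c)) := by
    intro v hv
    have hAv := hAv' v hv
    have hmem : D (T v) = (-c) • T v := by
      have hΓAv : Γ (A v) = c • Γ v - (m:ℂ) • v := by
        rw [hAv]; simp [map_smul, hΓΓ, map_sub]
      have : D (T v) = A (Γ (A v)) + (m:ℂ) • Γ (Γ (A v)) := by
        simp [hD, hT, LinearMap.add_apply, LinearMap.smul_apply]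
      rw [this, hAΓ, hA2 v hv, hΓΓ]
      simp only [hT, LinearMap.comp_apply, hAv, map_smul, map_sub, hΓΓ]
      module
    exact Module.End.mem_eigenspace_iff.mpr hmem
  have hinj : ∀ v ∈ Module.End.eigenspace D c, T v = 0 → v = 0 := by
    intro v hv hTv
    have : T (T v) = 0 := by rw [hTv, map_zero]
    have hTT : T (T v) = ((m:ℂ) ^ 2 - c ^ 2) • v := by
      simp only [hT, LinearMap.comp_apply]
      rw [hAΓ, map_neg, hΓΓ, hA2 v hv]
      module
    rw [hTT] at this
    have hne : (m:ℂ) ^ 2 - c ^ 2 ≠ 0 := fun h => hc (by linear_combination -h)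
    exact (smul_eq_zero.mp this).resolve_left hne
  have φ := T.restrict (p := Module.End.eigenspace D c) (q := Module.End.eigenspace D (-c)) hmaps
  exact LinearMap.finrank_le_finrank_of_injective (f := T.restrict hmaps) (by
    rw [← LinearMap.ker_eq_bot, LinearMap.ker_eq_bot']
    rintro ⟨v, hv⟩ h
    have : T v = 0 := congrArg Subtype.val h
    exact Subtype.ext (hinj v hv this))

lemma aux_eigen_m (A Γ : V →ₗ[ℂ] V)
    (hA : LinearMap.adjoint A = A)
    (hΓ2 : Γ ∘ₗ Γ = LinearMap.id)
    (hanti : A ∘ₗ Γ = -(Γ ∘ₗ A))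
    (m : ℝ) (hm : 0 < m) (ε : ℂ) (hε : ε = 1 ∨ ε = -1) :
    Module.End.eigenspace (A + (m : ℂ) • Γ) (ε * m) =
      LinearMap.ker A ⊓ Module.End.eigenspace Γ ε := by
  have hΓΓ : ∀ x, Γ (Γ x) = x := fun x => congrFun (congrArg DFunLike.coe hΓ2) x
  have hAΓ : ∀ x, A (Γ x) = -Γ (A x) := by
    intro x; have := congrFun (congrArg DFunLike.coe hanti) x; simpa using this
  have hε2 : ε ^ 2 = 1 := by rcases hε with h | h <;> simp [h]
  have hm0 : (m : ℂ) ≠ 0 := by exact_mod_cast ne_of_gt hm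
  ext v
  simp only [Module.End.mem_eigenspace_iff, Submodule.mem_inf, LinearMap.mem_ker,
    LinearMap.add_apply, LinearMap.smul_apply]
  constructor
  · intro hv
    have h1 := congrArg (fun w => A w + (m:ℂ) • Γ w) hv
    simp only [map_add, map_smul] at h1
    rw [hAΓ, hΓΓ] at h1
    have h3 : A (A v) = ((ε*(m:ℂ))^2 - (m:ℂ)^2) • v := by
      linear_combination (norm := module) h1 + (ε*(m:ℂ)) • hv
    rw [mul_pow, hε2, one_mul, sub_self, zero_smul] at h3
    have hAv : A v = 0 := aux_ker_sq A hA h3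
    refine ⟨hAv, ?_⟩
    have h4 : (m:ℂ) • Γ v = (m:ℂ) • ε • v := by
      rw [show (m:ℂ) • ε • v = (ε * m) • v by module, ← hv, hAv, zero_add]
    exact smul_right_injective V hm0 h4
  · rintro ⟨hAv, hΓv⟩
    rw [hAv, hΓv, zero_add]
    module

lemma aux_etaSum (A Γ : V →ₗ[ℂ] V)
    (hA : LinearMap.adjoint A = A)
    (hΓ2 : Γ ∘ₗ Γ = LinearMap.id)
    (hanti : A ∘ₗ Γ = -(Γ ∘ₗ A))
    (m : ℝ) (hm : 0 < m) :
    etaSum (A + (m : ℂ) • Γ) =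
      (finrank ℂ ↥(LinearMap.ker A ⊓ Module.End.eigenspace Γ 1) : ℝ)
      - (finrank ℂ ↥(LinearMap.ker A ⊓ Module.End.eigenspace Γ (-1)) : ℝ) := by
  classical
  set D : V →ₗ[ℂ] V := A + (m : ℂ) • Γ with hD
  set f : ℝ → ℝ := fun μ => Real.sign μ * (finrank ℂ (Module.End.eigenspace D (μ : ℂ)) : ℝ) with hf
  have hsupp : Function.support f ⊆ Complex.ofReal ⁻¹' {c | Module.End.HasEigenvalue D c} := by
    intro μ hμ
    simp only [Set.mem_preimage, Set.mem_setOf_eq]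
    rw [Module.End.hasEigenvalue_iff]
    intro hbot
    apply hμ
    simp [hf, hbot, finrank_bot]
  have hfin : (Function.support f).Finite :=
    Set.Finite.subset (Set.Finite.preimage Complex.ofReal_injective.injOn
      (Module.End.finite_hasEigenvalue D)) hsupp
  set t : Finset ℝ := hfin.toFinset ∪ {m, -m} with ht
  set s : Finset ℝ := t ∪ t.image (fun x => -x) with hs
  have hsub : ∀ μ : ℝ, μ ∉ s → f μ = 0 := by
    intro μ hμ
    by_contra hne
    exact hμ (by
      apply Finset.mem_union_left
      apply Finset.mem_union_left
      simpa [Set.Finite.mem_toFinset] using hne)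
  have h1 : etaSum D = ∑ μ ∈ s, f μ := tsum_eq_sum hsub
  have hmth : m ∈ t := by simp [ht]
  have hmt : -m ∈ t := by simp [ht]
  have hms : ({m, -m} : Finset ℝ) ⊆ s := by
    intro x hx
    rcases Finset.mem_insert.mp hx with h | h
    · exact Finset.mem_union_left _ (h ▸ hmth)
    · exact Finset.mem_union_left _ ((Finset.mem_singleton.mp h) ▸ hmt)
  have hsplit : ∑ μ ∈ s, f μ = (∑ μ ∈ s \ {m, -m}, f μ) + ∑ μ ∈ ({m, -m} : Finset ℝ), f μ :=
    (Finset.sum_sdiff hms).symm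
  have hneg_mem : ∀ a ∈ s, -a ∈ s := by
    intro a ha
    rcases Finset.mem_union.mp ha with h | h
    · exact Finset.mem_union_right _ (Finset.mem_image.mpr ⟨a, h, rfl⟩)
    · rcases Finset.mem_image.mp h with ⟨b, hb, rfl⟩
      exact Finset.mem_union_left _ (by simpa using hb)
  have hrank_eq : ∀ a : ℝ, a ≠ m → a ≠ -m →
      finrank ℂ (Module.End.eigenspace D ((a : ℝ) : ℂ)) =
      finrank ℂ (Module.End.eigenspace D (-((a : ℝ) : ℂ))) := by
    intro a ham hanm
    have ha2 : ((a : ℂ)) ^ 2 ≠ ((m : ℂ)) ^ 2 := by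
      intro h
      have : (a : ℝ) ^ 2 = m ^ 2 := by exact_mod_cast h
      rcases (Commute.all (a:ℝ) m).sq_eq_sq_iff_eq_or_eq_neg.mp this with h' | h'
      · exact ham h'
      · exact hanm h'
    refine le_antisymm ?_ ?_
    · have h := aux_rank_le A Γ hΓ2 hanti m (a:ℂ) ha2
      rwa [← hD] at h
    · have h := aux_rank_le A Γ hΓ2 hanti m (-(a:ℂ)) (by rwa [neg_sq])
      rw [← hD, neg_neg] at h
      exact h
  have hzero : ∑ μ ∈ s \ {m, -m}, f μ = 0 := by
    have hpairsum : ∀ a ∈ s \ ({m, -m} : Finset ℝ), f a + f (-a) = 0 := by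
      intro a ha
      rcases Finset.mem_sdiff.mp ha with ⟨has, hanot⟩
      have ham : a ≠ m := fun h => hanot (by simp [h])
      have hanm : a ≠ -m := fun h => hanot (by simp [h])
      have key := hrank_eq a ham hanm
      simp only [hf]
      rw [Real.sign_neg, show ((-a : ℝ) : ℂ) = -((a:ℝ):ℂ) by push_cast; ring, ← key]
      ring
    exact Finset.sum_involution (fun a _ => -a)
      (fun a ha => hpairsum a ha)
      (fun a ha hfa h => hfa (by
        have : a = 0 := by linarith [neg_eq_iff_eq_neg.mp h]
        simp [hf, this, Real.sign_zero]))
      (fun a ha => by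
        rcases Finset.mem_sdiff.mp ha with ⟨has, hanot⟩
        refine Finset.mem_sdiff.mpr ⟨hneg_mem a has, ?_⟩
        intro hcon
        apply hanot
        rcases Finset.mem_insert.mp hcon with h | h
        · have h' : -a = m := h
          have : a = -m := by linarith
          simp [this]
        · have h' : -a = -m := Finset.mem_singleton.mp h
          have : a = m := by linarith
          simp [this])
      (fun a ha => neg_neg a)
  have e1 : Module.End.eigenspace D ((m : ℝ) : ℂ) =
      LinearMap.ker A ⊓ Module.End.eigenspace Γ 1 := by
    rw [hD]
    have h := aux_eigen_m A Γ hA hΓ2 hanti m hm 1 (Or.inl rfl)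
    rwa [one_mul] at h
  have e2 : Module.End.eigenspace D ((-m : ℝ) : ℂ) =
      LinearMap.ker A ⊓ Module.End.eigenspace Γ (-1) := by
    rw [hD, show ((-m:ℝ):ℂ) = -((m:ℝ):ℂ) from by push_cast; ring]
    have h := aux_eigen_m A Γ hA hΓ2 hanti m hm (-1) (Or.inr rfl)
    rwa [neg_one_mul] at h
  have hpair : ∑ μ ∈ ({m, -m} : Finset ℝ), f μ =
      (finrank ℂ ↥(LinearMap.ker A ⊓ Module.End.eigenspace Γ 1) : ℝ)
      - (finrank ℂ ↥(LinearMap.ker A ⊓ Module.End.eigenspace Γ (-1)) : ℝ) := by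
    have hmm : (m : ℝ) ≠ -m := by linarith
    rw [Finset.sum_pair hmm]
    simp only [hf]
    rw [e1, e2, Real.sign_neg, Real.sign_of_pos hm]
    ring
  rw [h1, hsplit, hzero, hpair, zero_add]

/-- eigenspace of -Γ at c equals eigenspace of Γ at -c -/
lemma aux_eigen_neg (Γ : V →ₗ[ℂ] V) (c : ℂ) :
    Module.End.eigenspace (-Γ) c = Module.End.eigenspace Γ (-c) := by
  ext x
  rw [Module.End.mem_eigenspace_iff, Module.End.mem_eigenspace_iff, LinearMap.neg_apply,
    neg_eq_iff_eq_neg, ← neg_smul]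

/-- finrank of eigenspace of restricted map equals finrank of intersection -/
lemma aux_restrict_finrank (A Γ : V →ₗ[ℂ] V)
    (hker : ∀ x ∈ LinearMap.ker A, Γ x ∈ LinearMap.ker A) (c : ℂ) :
    finrank ℂ (Module.End.eigenspace (Γ.restrict hker) c) =
      finrank ℂ ↥(LinearMap.ker A ⊓ Module.End.eigenspace Γ c) := by
  have hmap : (Module.End.eigenspace (Γ.restrict hker) c).map (LinearMap.ker A).subtype =
      LinearMap.ker A ⊓ Module.End.eigenspace Γ c := by
    ext x
    simp only [Submodule.mem_map, Submodule.mem_inf]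
    constructor
    · rintro ⟨y, hy, rfl⟩
      rw [Module.End.mem_eigenspace_iff] at hy
      refine ⟨y.2, ?_⟩
      rw [Module.End.mem_eigenspace_iff]
      have := congrArg Subtype.val hy
      simpa [LinearMap.restrict_apply] using this
    · rintro ⟨hxk, hxe⟩
      rw [Module.End.mem_eigenspace_iff] at hxe
      refine ⟨⟨x, hxk⟩, ?_, rfl⟩
      rw [Module.End.mem_eigenspace_iff]
      apply Subtype.ext
      simpa [LinearMap.restrict_apply] using hxe
  rw [← hmap, Submodule.finrank_map_subtype_eq]


lemma aux_trace {W : Type*} [NormedAddCommGroup W] [InnerProductSpace ℂ W]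
    [FiniteDimensional ℂ W] (g : W →ₗ[ℂ] W) (h2 : ∀ x, g (g x) = x) :
    LinearMap.trace ℂ W g =
      (finrank ℂ (Module.End.eigenspace g (1 : ℂ)) : ℂ)
      - (finrank ℂ (Module.End.eigenspace g (-1 : ℂ)) : ℂ) := by
  set P : W →ₗ[ℂ] W := (2⁻¹ : ℂ) • (LinearMap.id + g) with hP
  set Q : W →ₗ[ℂ] W := (2⁻¹ : ℂ) • (LinearMap.id - g) with hQ
  have hPproj : LinearMap.IsProj (Module.End.eigenspace g (1 : ℂ)) P := by
    constructor
    · intro x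
      rw [Module.End.mem_eigenspace_iff, one_smul]
      simp only [hP, LinearMap.smul_apply, LinearMap.add_apply, LinearMap.id_apply,
        map_smul, map_add, h2]
      module
    · intro x hx
      rw [Module.End.mem_eigenspace_iff, one_smul] at hx
      simp only [hP, LinearMap.smul_apply, LinearMap.add_apply, LinearMap.id_apply, hx]
      rw [← two_smul ℂ x, smul_smul]
      norm_num
  have hQproj : LinearMap.IsProj (Module.End.eigenspace g (-1 : ℂ)) Q := by
    constructor
    · intro x
      rw [Module.End.mem_eigenspace_iff]
      simp only [hQ, LinearMap.smul_apply, LinearMap.sub_apply, LinearMap.id_apply,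
        map_smul, map_sub, h2]
      module
    · intro x hx
      rw [Module.End.mem_eigenspace_iff] at hx
      simp only [hQ, LinearMap.smul_apply, LinearMap.sub_apply, LinearMap.id_apply, hx]
      module
  have hgPQ : g = P - Q := by
    ext x
    simp only [hP, hQ, LinearMap.sub_apply, LinearMap.smul_apply, LinearMap.add_apply,
      LinearMap.id_apply]
    module
  rw [show (LinearMap.trace ℂ W) g = (LinearMap.trace ℂ W) (P - Q) from congrArg _ hgPQ,
    map_sub, hPproj.trace, hQproj.trace]

end EtaAux

/-- (η(A + mΓ) - η(A - mΓ))/2 = tr(Γ restricted to ker A) for all m > 0. -/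
theorem eta_difference_eq_trace
    {V : Type*} [NormedAddCommGroup V] [InnerProductSpace ℂ V] [FiniteDimensional ℂ V]
    (A Γ : V →ₗ[ℂ] V)
    (hA : LinearMap.adjoint A = A)
    (hΓ : LinearMap.adjoint Γ = Γ)
    (hΓ2 : Γ ∘ₗ Γ = LinearMap.id)
    (hanti : A ∘ₗ Γ = -(Γ ∘ₗ A))
    (m : ℝ) (hm : 0 < m)
    (hker : ∀ x ∈ LinearMap.ker A, Γ x ∈ LinearMap.ker A) :
    (((etaSum (A + (m : ℂ) • Γ) - etaSum (A - (m : ℂ) • Γ)) / 2 : ℝ) : ℂ) =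
      LinearMap.trace ℂ (LinearMap.ker A) (Γ.restrict hker) := by
  classical
  open Module LinearMap in
  -- hypotheses for -Γ
  have hΓ2' : (-Γ) ∘ₗ (-Γ) = LinearMap.id := by
    rw [LinearMap.neg_comp, LinearMap.comp_neg, neg_neg, hΓ2]
  have hanti' : A ∘ₗ (-Γ) = -((-Γ) ∘ₗ A) := by
    simp [LinearMap.comp_neg, LinearMap.neg_comp, hanti]
  have hsub : A - (m : ℂ) • Γ = A + (m : ℂ) • (-Γ) := by
    rw [smul_neg, ← sub_eq_add_neg]
  set d1 : ℕ := Module.finrank ℂ ↥(LinearMap.ker A ⊓ Module.End.eigenspace Γ 1) with hd1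
  set d2 : ℕ := Module.finrank ℂ ↥(LinearMap.ker A ⊓ Module.End.eigenspace Γ (-1)) with hd2
  have h1 : etaSum (A + (m : ℂ) • Γ) = (d1 : ℝ) - (d2 : ℝ) :=
    aux_etaSum A Γ hA hΓ2 hanti m hm
  have h2 : etaSum (A - (m : ℂ) • Γ) = (d2 : ℝ) - (d1 : ℝ) := by
    rw [hsub, aux_etaSum A (-Γ) hA hΓ2' hanti' m hm, aux_eigen_neg, aux_eigen_neg, neg_neg]
  -- trace side
  have hres2 : ∀ x : ↥(LinearMap.ker A), (Γ.restrict hker) ((Γ.restrict hker) x) = x := by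
    intro x
    apply Subtype.ext
    simp only [LinearMap.restrict_apply]
    exact congrFun (congrArg DFunLike.coe hΓ2) (x : V)
  have htr := aux_trace (Γ.restrict hker) hres2
  rw [htr, aux_restrict_finrank A Γ hker 1, aux_restrict_finrank A Γ hker (-1), ← hd1, ← hd2,
    h1, h2]
  push_cast
  ring
end

section
/- Let H be a Hilbert space, P₁, P₂ orthogonal projections such that T := P₂P₁ + (Id - P₂)(Id - P₁) is Fredholm. Then P₂P₁ : ran(P₁) → ran(P₂) is Fredholm, with kernel equal to ker(T) ∩ ran(P₁) and range equal to ran(T) ∩ ran(P₂). -/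
/-!
For an idempotent `p`, the operator `T = q p + (1 - q)(1 - p)` agrees with `q p` on `ran p`, and
`q T = q p` because `q (1 - q) = 0`. The first fact identifies the kernel of `q p : ran p → ran q`
with `ker T ∩ ran p` and shows `ran (q p) ⊆ ran T`; the second gives the converse, since
`y = T z ∈ ran q` forces `y = q T z = q p (p z)`. So the kernel is a subspace of `ker T`, and the
cokernel `ran q / (ran T ∩ ran q)` embeds into `H / ran T`: both are finite dimensional.
-/
open LinearMap Submodule

namespace Submodule

variable {R M : Type*} [Ring R] [AddCommGroup M] [Module R M]

theorem comap_subtype_inf_self (N W : Submodule R M) :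
    (W ⊓ N).comap N.subtype = W.comap N.subtype := by
  rw [comap_inf, comap_subtype_self, inf_top_eq]

instance isNoetherian_comap_subtype (N W : Submodule R M) [IsNoetherian R W] :
    IsNoetherian R (W.comap N.subtype) :=
  isNoetherian_of_injective (N.subtype.restrict (p := W.comap N.subtype) (q := W) fun _ hx => hx)
    fun _ _ h => Subtype.ext <| Subtype.ext <| congrArg (fun w : W => (w : M)) h

theorem finite_quotient_comap_subtype (N W : Submodule R M) [IsNoetherian R (M ⧸ W)] :
    Module.Finite R (N ⧸ W.comap N.subtype) :=
  have hker : ker (W.mkQ ∘ₗ N.subtype) = W.comap N.subtype := by rw [ker_comp, ker_mkQ]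
  Module.Finite.of_injective ((W.comap N.subtype).liftQ _ hker.ge)
    (ker_eq_bot.mp (ker_liftQ_eq_bot' _ _ hker.symm))

end Submodule

namespace Module.End

variable {R M : Type*} [Ring R] [AddCommGroup M] [Module R M]

def twoProjectionOp (p q : Module.End R M) : Module.End R M := q * p + (1 - q) * (1 - p)

variable {p q : Module.End R M}

theorem twoProjectionOp_apply_of_mem_range (hp : IsIdempotentElem p) {x : M}
    (hx : x ∈ range p) : twoProjectionOp p q x = q (p x) := by
  have hpx : p x = x := hp.mem_range_iff.mp hx
  simp [twoProjectionOp, hpx]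

theorem mul_twoProjectionOp (hq : IsIdempotentElem q) : q * twoProjectionOp p q = q * p := by
  have hq' : q * (1 - q) = 0 := by rw [mul_sub, mul_one, hq.eq, sub_self]
  rw [twoProjectionOp, mul_add, ← mul_assoc, ← mul_assoc, hq.eq, hq', zero_mul, add_zero]

variable {f : range p →ₗ[R] range q} (hf : ∀ x : range p, (f x : M) = q (p x))
include hf

theorem ker_eq_comap_ker_twoProjectionOp (hp : IsIdempotentElem p) :
    ker f = (ker (twoProjectionOp p q)).comap (range p).subtype := by
  ext x
  simp [← Subtype.val_inj, hf, twoProjectionOp_apply_of_mem_range hp x.2]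

theorem range_eq_comap_range_twoProjectionOp (hp : IsIdempotentElem p) (hq : IsIdempotentElem q) :
    range f = (range (twoProjectionOp p q)).comap (range q).subtype := by
  ext y
  constructor
  · rintro ⟨x, rfl⟩
    exact ⟨x, (twoProjectionOp_apply_of_mem_range hp x.2).trans (hf x).symm⟩
  · rintro ⟨z, hz⟩
    refine ⟨⟨p z, mem_range_self p z⟩, Subtype.ext ?_⟩
    calc (f ⟨p z, _⟩ : M) = (q * p) z := by rw [hf, mul_apply, ← mul_apply p, hp.eq]
      _ = q (twoProjectionOp p q z) := by rw [← mul_twoProjectionOp hq, mul_apply]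
      _ = y := by rw [hz]; exact hq.mem_range_iff.mp y.2

end Module.End

open Module.End

theorem projections_fredholm_general
    {H : Type*} [NormedAddCommGroup H] [InnerProductSpace ℂ H]
    (P₁ P₂ : H →L[ℂ] H)
    (h1idem : IsIdempotentElem P₁) (h2idem : IsIdempotentElem P₂)
    (T : H →L[ℂ] H)
    (hT : T = P₂.comp P₁ + (1 - P₂).comp (1 - P₁))
    (hTker : FiniteDimensional ℂ (LinearMap.ker (T : H →ₗ[ℂ] H)))
    (hTcoker : FiniteDimensional ℂ (H ⧸ LinearMap.range (T : H →ₗ[ℂ] H)))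
    (f : LinearMap.range (P₁ : H →ₗ[ℂ] H) →ₗ[ℂ] LinearMap.range (P₂ : H →ₗ[ℂ] H))
    (hf : ∀ x : LinearMap.range (P₁ : H →ₗ[ℂ] H), (f x : H) = P₂ (P₁ x)) :
    LinearMap.ker f = (LinearMap.ker (T : H →ₗ[ℂ] H) ⊓ LinearMap.range (P₁ : H →ₗ[ℂ] H)).comap (LinearMap.range (P₁ : H →ₗ[ℂ] H)).subtype ∧
    LinearMap.range f
      = (LinearMap.range (T : H →ₗ[ℂ] H) ⊓ LinearMap.range (P₂ : H →ₗ[ℂ] H)).comap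
        (LinearMap.range (P₂ : H →ₗ[ℂ] H)).subtype ∧
    FiniteDimensional ℂ (LinearMap.ker f) ∧
    FiniteDimensional ℂ (↥(LinearMap.range (P₂ : H →ₗ[ℂ] H)) ⧸ LinearMap.range f) := by
  have hp : IsIdempotentElem (P₁ : H →ₗ[ℂ] H) := h1idem.map ContinuousLinearMap.toLinearMapRingHom
  have hq : IsIdempotentElem (P₂ : H →ₗ[ℂ] H) := h2idem.map ContinuousLinearMap.toLinearMapRingHom
  have hT' : (T : H →ₗ[ℂ] H) = twoProjectionOp P₁ P₂ := by subst hT; rfl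
  have hker := ker_eq_comap_ker_twoProjectionOp hf hp
  have hrange := range_eq_comap_range_twoProjectionOp hf hp hq
  rw [← hT'] at hker hrange
  refine ⟨by rw [hker, comap_subtype_inf_self], by rw [hrange, comap_subtype_inf_self], ?_, ?_⟩
  · rw [hker]
    infer_instance
  · rw [hrange]
    exact finite_quotient_comap_subtype _ _

/-- if T = P₂P₁ + (Id−P₂)(Id−P₁) is Fredholm, then P₂P₁ : ran P₁ → ran P₂ is
    Fredholm, with kernel ker T ∩ ran P₁ and range ran T ∩ ran P₂. -/
theorem projections_fredholm
    {H : Type*} [NormedAddCommGroup H] [InnerProductSpace ℂ H] [CompleteSpace H]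
    (P₁ P₂ : H →L[ℂ] H)
    (h1idem : IsIdempotentElem P₁) (h2idem : IsIdempotentElem P₂)
    (h1sa : IsSelfAdjoint P₁) (h2sa : IsSelfAdjoint P₂)
    (T : H →L[ℂ] H)
    (hT : T = P₂.comp P₁ + (1 - P₂).comp (1 - P₁))
    (hTker : FiniteDimensional ℂ (LinearMap.ker (T : H →ₗ[ℂ] H)))
    (hTcoker : FiniteDimensional ℂ (H ⧸ LinearMap.range (T : H →ₗ[ℂ] H)))
    (f : LinearMap.range (P₁ : H →ₗ[ℂ] H) →ₗ[ℂ] LinearMap.range (P₂ : H →ₗ[ℂ] H))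
    (hf : ∀ x : LinearMap.range (P₁ : H →ₗ[ℂ] H), (f x : H) = P₂ (P₁ x)) :
    LinearMap.ker f = (LinearMap.ker (T : H →ₗ[ℂ] H) ⊓ LinearMap.range (P₁ : H →ₗ[ℂ] H)).comap (LinearMap.range (P₁ : H →ₗ[ℂ] H)).subtype ∧
    LinearMap.range f
      = (LinearMap.range (T : H →ₗ[ℂ] H) ⊓ LinearMap.range (P₂ : H →ₗ[ℂ] H)).comap
        (LinearMap.range (P₂ : H →ₗ[ℂ] H)).subtype ∧
    FiniteDimensional ℂ (LinearMap.ker f) ∧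
    FiniteDimensional ℂ (↥(LinearMap.range (P₂ : H →ₗ[ℂ] H)) ⧸ LinearMap.range f) :=
  projections_fredholm_general P₁ P₂ h1idem h2idem T hT hTker hTcoker f hf
end
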